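/- Let p ≡ 7 (mod 16) be prime with p = (a_p + b_p√2)(a_p - b_p√2), (a_p,b_p) the minimal positive solution of a² - 2b² = p. Let α' ∈ ℤ[ζ₁₆ + ζ₁₆⁷] with σ₁(α')σ₁₅(α') = a_p + b_p√2. Then for every nonzero β ∈ ℤ[ζ₁₆], writing 2x = |σ₁(β)|² + |σ₇(β)|² + |σ₃(β)|² + |σ₅(β)|² and the corresponding 2y√2 as the √2-part (so |σ₁(β)|²+|σ₇(β)|² = 2(x + y√2), |σ₃(β)|²+|σ₅(β)|² = 2(x - y√2) with x,y ∈ ℤ), one has 4a_p·x + 8b_p·y ≥ 4a_p. Consequently, the shortest nonzero vector of the ideal α'ℤ[ζ₁₆] has the same length √(4a_p) as the shortest vector of α'ℤ[ζ₁₆+ζ₁₆⁷]. -/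

import Mathlib

open Complex

/-- A primitive 16th root of unity in `ℂ`. -/
noncomputable def ζ₁₆ : ℂ := Complex.exp (2 * Real.pi * Complex.I / 16)

/-- The image under `σⱼ : ζ₁₆ ↦ ζ₁₆ʲ` of the element `∑ bᵢ ζ₁₆ⁱ` of `ℤ[ζ₁₆]`. -/
noncomputable def conj16 (b₀ b₁ b₂ b₃ b₄ b₅ b₆ b₇ : ℤ) (j : ℕ) : ℂ :=
  b₀ + b₁ * ζ₁₆ ^ j + b₂ * ζ₁₆ ^ (2 * j) + b₃ * ζ₁₆ ^ (3 * j) + b₄ * ζ₁₆ ^ (4 * j)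
    + b₅ * ζ₁₆ ^ (5 * j) + b₆ * ζ₁₆ ^ (6 * j) + b₇ * ζ₁₆ ^ (7 * j)

/-- The image under `σⱼ` of the element `c₀ + c₁ w + c₂ w² + c₃ w³` of
`ℤ[ζ₁₆ + ζ₁₆⁷]`, where `w = ζ₁₆ + ζ₁₆⁷`. -/
noncomputable def conjReal16 (c₀ c₁ c₂ c₃ : ℤ) (j : ℕ) : ℂ :=
  c₀ + c₁ * (ζ₁₆ ^ j + ζ₁₆ ^ (7 * j)) + c₂ * (ζ₁₆ ^ j + ζ₁₆ ^ (7 * j)) ^ 2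
    + c₃ * (ζ₁₆ ^ j + ζ₁₆ ^ (7 * j)) ^ 3

theorem shortest_vector_extension_p7mod16
    (p : ℕ) (hp : p.Prime) (hp7 : p % 16 = 7)
    (a b : ℤ) (ha : 0 < a) (hb : 0 < b) (hab : a ^ 2 - 2 * b ^ 2 = (p : ℤ))
    (hmin : ∀ a' b' : ℤ, 0 < a' → 0 < b' → a' ^ 2 - 2 * b' ^ 2 = (p : ℤ) → a ≤ a')
    (c₀ c₁ c₂ c₃ : ℤ)
    (hα : conjReal16 c₀ c₁ c₂ c₃ 1 * conjReal16 c₀ c₁ c₂ c₃ 15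
      = (a : ℂ) + b * Real.sqrt 2) :
    ∀ b₀ b₁ b₂ b₃ b₄ b₅ b₆ b₇ : ℤ,
      conj16 b₀ b₁ b₂ b₃ b₄ b₅ b₆ b₇ 1 ≠ 0 →
      ∀ x y : ℤ,
        ‖conj16 b₀ b₁ b₂ b₃ b₄ b₅ b₆ b₇ 1‖ ^ 2
            + ‖conj16 b₀ b₁ b₂ b₃ b₄ b₅ b₆ b₇ 7‖ ^ 2
          = 2 * ((x : ℝ) + y * Real.sqrt 2) →
        ‖conj16 b₀ b₁ b₂ b₃ b₄ b₅ b₆ b₇ 3‖ ^ 2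
            + ‖conj16 b₀ b₁ b₂ b₃ b₄ b₅ b₆ b₇ 5‖ ^ 2
          = 2 * ((x : ℝ) - y * Real.sqrt 2) →
        4 * (a : ℝ) ≤ 4 * a * x + 8 * b * y := by
  intro b₀ b₁ b₂ b₃ b₄ b₅ b₆ b₇ hne x y h17 h35
  have s2 : (1:ℝ) < Real.sqrt 2 := by
    have : Real.sqrt 1 < Real.sqrt 2 := Real.sqrt_lt_sqrt (by norm_num) (by norm_num)
    simpa using this
  have s2sq : Real.sqrt 2 ^ 2 = 2 := Real.sq_sqrt (by norm_num)
  have hA1 : 0 < ‖conj16 b₀ b₁ b₂ b₃ b₄ b₅ b₆ b₇ 1‖ :=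
    norm_pos_iff.mpr hne
  have hA7 := sq_nonneg (‖conj16 b₀ b₁ b₂ b₃ b₄ b₅ b₆ b₇ 7‖)
  have hA3 := sq_nonneg (‖conj16 b₀ b₁ b₂ b₃ b₄ b₅ b₆ b₇ 3‖)
  have hA5 := sq_nonneg (‖conj16 b₀ b₁ b₂ b₃ b₄ b₅ b₆ b₇ 5‖)
  have hA1sq : 0 < ‖conj16 b₀ b₁ b₂ b₃ b₄ b₅ b₆ b₇ 1‖ ^ 2 := pow_pos hA1 2
  -- x + y√2 ≥ 0
  have h1 : 0 ≤ (x:ℝ) + y * Real.sqrt 2 := by linarith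
  -- x ≥ 1
  have hx0R : (0:ℝ) < x := by linarith
  have hx1 : (1:ℤ) ≤ x := by
    have : (0:ℤ) < x := by exact_mod_cast hx0R
    linarith
  -- p ≥ 2
  have hp2 : (2:ℤ) ≤ (p:ℤ) := by exact_mod_cast hp.two_le
  -- a ≥ 2b
  have ha2b : 2 * b ≤ a := by
    by_contra hlt
    push_neg at hlt
    have hsq : 2 * b ^ 2 < a ^ 2 := by nlinarith
    have ha' : 0 < 3 * a - 4 * b := by nlinarith
    rcases lt_trichotomy (2 * a) (3 * b) with h | h | h
    · have := hmin (3 * a - 4 * b) (3 * b - 2 * a) ha' (by linarith)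
        (by linear_combination hab)
      linarith
    · have hkeq : (p:ℤ) = (3 * a - 4 * b) ^ 2 := by
        linear_combination (-1 : ℤ) * hab - 2 * (2 * a - 3 * b) * h
      have hpZ : Prime ((p:ℕ) : ℤ) := Nat.prime_iff_prime_int.mp hp
      have hdvd : ((p:ℕ) : ℤ) ∣ 3 * a - 4 * b :=
        hpZ.dvd_of_dvd_pow (n := 2) (hkeq ▸ dvd_refl _)
      have hle : ((p:ℕ) : ℤ) ≤ 3 * a - 4 * b := Int.le_of_dvd ha' hdvd
      nlinarith
    · have := hmin (3 * a - 4 * b) (2 * a - 3 * b) ha' (by linarith)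
        (by linear_combination hab)
      linarith
  have haR : (0:ℝ) < a := by exact_mod_cast ha
  have hbR : (0:ℝ) < b := by exact_mod_cast hb
  have ha2bR : 2 * (b:ℝ) ≤ a := by exact_mod_cast ha2b
  have hx1R : (1:ℝ) ≤ (x:ℝ) := by exact_mod_cast hx1
  rcases le_or_gt 0 y with hy | hy
  · have hyR : (0:ℝ) ≤ y := by exact_mod_cast hy
    nlinarith
  · have hy1 : y ≤ -1 := by linarith
    have hy1R : (1:ℝ) ≤ -(y:ℝ) := by
      have h' : (1:ℤ) ≤ -y := by linarith
      have := (@Int.cast_le ℝ _ _ _).mpr h'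
      push_cast at this
      linarith
    have hxyR : -(y:ℝ) < x := by nlinarith
    have hxy : -y + 1 ≤ x := by
      have : -y < x := by exact_mod_cast hxyR
      linarith
    have hxyR' : -(y:ℝ) + 1 ≤ x := by exact_mod_cast hxy
    nlinarith [mul_nonneg (le_of_lt haR) (by linarith : (0:ℝ) ≤ (x:ℝ) - 1 + y),
      mul_nonneg (by linarith : (0:ℝ) ≤ -(y:ℝ)) (by linarith : (0:ℝ) ≤ (a:ℝ) - 2 * b)]
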